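/- arXiv:math/0604433 — 4 statements merged into one kernel-verified Lean document; each statement's English description precedes it below -/
import Mathlib

section
/- Let G be a countable discrete group equipped with the word metric d coming from a finite symmetric generating set, let μ be a probability measure on G, let R ⊆ G, and for k > 0 let R_k = { r ∈ R : there exists r' ∈ R with r' ≠ r and d(r, r') ≤ k } be the set of k-dense elements of R. Then for all natural numbers m < n, μ^(n)(R) ≤ μ^(n)(R_k) + sup{ μ^(m)({g}) : g ∈ G } + μ^(m)(G ∖ B_{k/2}), where B_{k/2} = { g ∈ G : ∥g∥ ≤ k/2 } is the ball of radius k/2 about the identity in the word metric. -/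
open ENNReal MeasureTheory

/-- The word length of `g` with respect to a generating set `S`: the least `n` such that
`g` is a product of `n` elements of `S`. -/
noncomputable def wordLength {G : Type*} [Group G] (S : Set G) (g : G) : ℕ :=
  sInf {n : ℕ | ∃ l : List G, (∀ x ∈ l, x ∈ S) ∧ l.length = n ∧ l.prod = g}

/-- The word metric `d(x,y) = ∥x⁻¹ y∥` associated to the generating set `S`. -/
noncomputable def wordDist {G : Type*} [Group G] (S : Set G) (x y : G) : ℕ :=
  wordLength S (x⁻¹ * y)

/-- The `n`-fold convolution `μ^(n)` of a probability distribution `μ` on a group `G`: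
`μ^(0)` is the point mass at the identity, and
`μ^(n)(A) = Σ_g μ^(n-1)({g}) μ(g⁻¹A)`, the distribution at time `n` of the random walk
with step distribution `μ` started at the identity. -/
noncomputable def convPow {G : Type*} [Group G] (μ : PMF G) : ℕ → PMF G
  | 0 => PMF.pure 1
  | n + 1 => (convPow μ n).bind fun g => μ.map fun s => g * s

/-!
Split `R` into its `k`-dense part `R_k` and the rest `D = R \ R_k`, whose distinct points are
more than `k` apart. Write `μ^(n)` as the law of `g h` with `g ~ μ^(n-m)` and `h ~ μ^(m)`
independent. For fixed `g`, the event `g h ∈ D` forces either `‖h‖ > k/2`, or `h` to be the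
unique point of `g⁻¹ D` in the ball `B_{k/2}` (two such points would give two points of `D`
at distance `≤ k`). Hence `μ^(n)(D) ≤ sup_h μ^(m)({h}) + μ^(m)(G \ B_{k/2})`.
-/

namespace PMF

variable {α β : Type*}

lemma toOuterMeasure_le_iSup_of_subsingleton (p : PMF α) {s : Set α} (hs : s.Subsingleton) :
    p.toOuterMeasure s ≤ ⨆ a, p a := by
  rcases hs.eq_empty_or_singleton with rfl | ⟨a, rfl⟩
  · simp
  · rw [toOuterMeasure_apply_singleton]
    exact le_iSup p a

lemma toOuterMeasure_le_iSup_add_compl (p : PMF α) {s t : Set α}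
    (hst : (s ∩ t).Subsingleton) :
    p.toOuterMeasure s ≤ (⨆ a, p a) + p.toOuterMeasure tᶜ :=
  calc p.toOuterMeasure s ≤ p.toOuterMeasure (s ∩ t) + p.toOuterMeasure (s \ t) :=
        measure_le_inter_add_sdiff _ _ _
    _ ≤ (⨆ a, p a) + p.toOuterMeasure tᶜ := by
        gcongr
        · exact p.toOuterMeasure_le_iSup_of_subsingleton hst
        · exact Set.sdiff_subset_compl s t

lemma toOuterMeasure_bind_le (p : PMF α) (f : α → PMF β) {s : Set β} {c : ℝ≥0∞}
    (h : ∀ a, (f a).toOuterMeasure s ≤ c) : (p.bind f).toOuterMeasure s ≤ c :=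
  calc (p.bind f).toOuterMeasure s = ∑' a, p a * (f a).toOuterMeasure s :=
        toOuterMeasure_bind_apply p f s
    _ ≤ ∑' a, p a * c := ENNReal.tsum_le_tsum fun a => mul_le_mul_right (h a) _
    _ = c := by rw [ENNReal.tsum_mul_right, tsum_coe, one_mul]

end PMF

section WordMetric

variable {G : Type*} [Group G] {S : Set G}

lemma exists_list_prod_eq (hSsymm : ∀ s ∈ S, s⁻¹ ∈ S) (hSgen : Subgroup.closure S = ⊤)
    (g : G) : ∃ l : List G, (∀ x ∈ l, x ∈ S) ∧ l.prod = g := by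
  have hS : S ∪ S⁻¹ = S := Set.union_eq_left.mpr fun s hs => by simpa using hSsymm _ hs
  have hg : g ∈ (Subgroup.closure S).toSubmonoid := by simp [hSgen]
  rw [Subgroup.closure_toSubmonoid, hS] at hg
  exact Submonoid.exists_list_of_mem_closure hg

lemma wordLength_le_length {l : List G} (hl : ∀ x ∈ l, x ∈ S) :
    wordLength S l.prod ≤ l.length :=
  Nat.sInf_le ⟨l, hl, rfl, rfl⟩

lemma exists_list_length_eq_wordLength (hSsymm : ∀ s ∈ S, s⁻¹ ∈ S)
    (hSgen : Subgroup.closure S = ⊤) (g : G) :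
    ∃ l : List G, (∀ x ∈ l, x ∈ S) ∧ l.length = wordLength S g ∧ l.prod = g := by
  obtain ⟨l, hl, hprod⟩ := exists_list_prod_eq hSsymm hSgen g
  exact Nat.sInf_mem
    (s := {n | ∃ l : List G, (∀ x ∈ l, x ∈ S) ∧ l.length = n ∧ l.prod = g})
    ⟨l.length, l, hl, rfl, hprod⟩

lemma wordLength_mul_le (hSsymm : ∀ s ∈ S, s⁻¹ ∈ S) (hSgen : Subgroup.closure S = ⊤)
    (x y : G) : wordLength S (x * y) ≤ wordLength S x + wordLength S y := by
  obtain ⟨l₁, hl₁, hlen₁, rfl⟩ := exists_list_length_eq_wordLength hSsymm hSgen x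
  obtain ⟨l₂, hl₂, hlen₂, rfl⟩ := exists_list_length_eq_wordLength hSsymm hSgen y
  rw [← hlen₁, ← hlen₂, ← List.length_append, ← List.prod_append]
  exact wordLength_le_length fun a ha => (List.mem_append.mp ha).elim (hl₁ a) (hl₂ a)

lemma wordLength_inv_le (hSsymm : ∀ s ∈ S, s⁻¹ ∈ S) (hSgen : Subgroup.closure S = ⊤)
    (x : G) : wordLength S x⁻¹ ≤ wordLength S x := by
  obtain ⟨l, hl, hlen, rfl⟩ := exists_list_length_eq_wordLength hSsymm hSgen x
  rw [← hlen, List.prod_inv_reverse, ← List.length_map (f := fun a => a⁻¹),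
    ← List.length_reverse]
  refine wordLength_le_length fun a ha => ?_
  obtain ⟨b, hb, rfl⟩ := List.mem_map.mp (List.mem_reverse.mp ha)
  exact hSsymm b (hl b hb)

lemma wordDist_mul_left (S : Set G) (g a b : G) :
    wordDist S (g * a) (g * b) = wordDist S a b := by
  simp [wordDist, mul_assoc]

lemma wordDist_le_wordLength_add (hSsymm : ∀ s ∈ S, s⁻¹ ∈ S)
    (hSgen : Subgroup.closure S = ⊤) (a b : G) :
    wordDist S a b ≤ wordLength S a + wordLength S b :=
  (wordLength_mul_le hSsymm hSgen a⁻¹ b).trans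
    (Nat.add_le_add_right (wordLength_inv_le hSsymm hSgen a) _)

def denseElements (S : Set G) (k : ℝ) (R : Set G) : Set G :=
  {r ∈ R | ∃ r' ∈ R, r' ≠ r ∧ (wordDist S r r' : ℝ) ≤ k}

lemma subsingleton_preimage_diff_denseElements_inter_ball (hSsymm : ∀ s ∈ S, s⁻¹ ∈ S)
    (hSgen : Subgroup.closure S = ⊤) (k : ℝ) (R : Set G) (g : G) :
    ((g * ·) ⁻¹' (R \ denseElements S k R) ∩
      {a | (wordLength S a : ℝ) ≤ k / 2}).Subsingleton := by
  rintro a ⟨⟨haR, ha_sparse⟩, ha⟩ b ⟨⟨hbR, -⟩, hb⟩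
  by_contra hne
  have hdist : (wordDist S (g * a) (g * b) : ℝ) ≤ k := by
    rw [wordDist_mul_left]
    calc (wordDist S a b : ℝ) ≤ wordLength S a + wordLength S b := by
          exact_mod_cast wordDist_le_wordLength_add hSsymm hSgen a b
      _ ≤ k / 2 + k / 2 := add_le_add ha hb
      _ = k := add_halves k
  exact ha_sparse ⟨haR, g * b, hbR, fun h => hne (mul_left_cancel h).symm, hdist⟩

end WordMetric

section Convolution

variable {G : Type*} [Group G]

lemma convPow_add (μ : PMF G) (a b : ℕ) :
    convPow μ (a + b) = (convPow μ a).bind fun g => (convPow μ b).map (g * ·) := by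
  induction b with
  | zero =>
    simp only [Nat.add_zero, convPow, PMF.pure_map, mul_one]
    exact (PMF.bind_pure _).symm
  | succ b ih =>
    change (convPow μ (a + b)).bind _ =
      (convPow μ a).bind fun g => ((convPow μ b).bind fun h => μ.map (h * ·)).map (g * ·)
    simp only [ih, PMF.bind_bind, PMF.map_bind, PMF.bind_map, Function.comp_def, PMF.map_comp,
      mul_assoc]

end Convolution

theorem statement1_general {G : Type*} [Group G]
    (S : Set G) (hSsymm : ∀ s ∈ S, s⁻¹ ∈ S)
    (hSgen : Subgroup.closure S = ⊤)
    (μ : PMF G) (k : ℝ)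
    (R : Set G)
    (m n : ℕ) (hmn : m < n) :
    (convPow μ n).toOuterMeasure R ≤
      (convPow μ n).toOuterMeasure
          {r ∈ R | ∃ r' ∈ R, r' ≠ r ∧ (wordDist S r r' : ℝ) ≤ k} +
        (⨆ g : G, convPow μ m g) +
        (convPow μ m).toOuterMeasure {g : G | (wordLength S g : ℝ) ≤ k / 2}ᶜ := by
  have hRk : R ∩ denseElements S k R = denseElements S k R :=
    Set.inter_eq_right.mpr (Set.sep_subset _ _)
  have hsparse : (convPow μ n).toOuterMeasure (R \ denseElements S k R) ≤
      (⨆ g : G, convPow μ m g) +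
        (convPow μ m).toOuterMeasure {g : G | (wordLength S g : ℝ) ≤ k / 2}ᶜ := by
    rw [← Nat.sub_add_cancel hmn.le, convPow_add]
    refine PMF.toOuterMeasure_bind_le _ _ fun g => ?_
    rw [PMF.toOuterMeasure_map_apply]
    exact PMF.toOuterMeasure_le_iSup_add_compl _
      (subsingleton_preimage_diff_denseElements_inter_ball hSsymm hSgen k R g)
  calc (convPow μ n).toOuterMeasure R
      ≤ (convPow μ n).toOuterMeasure (R ∩ denseElements S k R) +
          (convPow μ n).toOuterMeasure (R \ denseElements S k R) :=
        measure_le_inter_add_sdiff _ _ _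
    _ ≤ _ := by rw [hRk, add_assoc]; exact add_le_add le_rfl hsparse

/-- Let `R ⊆ G` and let `R_k` be the set of `k`-dense elements of `R`, i.e. those `r ∈ R`
within word-metric distance `k` of some other element of `R`.  Then for all `m < n`,
`μ^(n)(R) ≤ μ^(n)(R_k) + sup { μ^(m)({g}) : g ∈ G } + μ^(m)(G \ B_{k/2})`,
where `B_{k/2}` is the ball of radius `k/2` about the identity in the word metric. -/
theorem statement1 {G : Type*} [Group G] [Countable G]
    (S : Set G) (hSfin : S.Finite) (hSsymm : ∀ s ∈ S, s⁻¹ ∈ S)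
    (hSgen : Subgroup.closure S = ⊤)
    (μ : PMF G) (k : ℝ) (hk : 0 < k)
    (R : Set G)
    (m n : ℕ) (hmn : m < n) :
    (convPow μ n).toOuterMeasure R ≤
      (convPow μ n).toOuterMeasure
          {r ∈ R | ∃ r' ∈ R, r' ≠ r ∧ (wordDist S r r' : ℝ) ≤ k} +
        (⨆ g : G, convPow μ m g) +
        (convPow μ m).toOuterMeasure {g : G | (wordLength S g : ℝ) ≤ k / 2}ᶜ :=
  statement1_general S hSsymm hSgen μ k R m n hmn
end

section
/- Let G be a group acting on a set X, and let S be a subsemigroup of G whose elements generate G as a group. If x ∈ X is a point whose S-orbit { s • x : s ∈ S } is finite, then the full G-orbit { g • x : g ∈ G } of x is finite; in fact G • x ⊆ (S • x) ∪ {x}. -/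
/-!
The set `T = S • x ∪ {x}` is finite and every `s ∈ S` maps it into itself. An injective
self-map of a finite set is onto, so each `s ∈ S` lies in the stabilizer of `T`, which is a
subgroup; as `S` generates `G`, all of `G` stabilizes `T`, hence `G • x ⊆ T`.
-/

open scoped Pointwise

section

variable {G X : Type*} [Group G] [MulAction G X]

theorem Set.Finite.smul_set_eq_of_subset {T : Set X} (hT : T.Finite) {g : G}
    (h : g • T ⊆ T) : g • T = T :=
  Set.eq_of_subset_of_ncard_le h (Set.ncard_smul_set g T).ge hT

theorem smul_set_eq_self_of_closure_eq_top {S : Set G} (hS : Subgroup.closure S = ⊤)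
    {T : Set X} (h : ∀ s ∈ S, s • T = T) (g : G) : g • T = T :=
  (Subgroup.closure_le (MulAction.stabilizer G T)).2 h (hS ▸ Subgroup.mem_top g)

theorem Subsemigroup.smul_orbit_union_singleton_subset (S : Subsemigroup G) (x : X)
    {s : G} (hs : s ∈ S) :
    s • ({y : X | ∃ t ∈ S, t • x = y} ∪ {x}) ⊆ {y : X | ∃ t ∈ S, t • x = y} := by
  rintro _ ⟨y, ⟨t, ht, rfl⟩ | rfl, rfl⟩
  · exact ⟨s * t, S.mul_mem hs ht, mul_smul s t x⟩
  · exact ⟨s, hs, rfl⟩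

end

/-- Let a group `G` act on a set `X`, and let `S` be a subsemigroup of `G` whose elements
generate `G` as a group.  If `x ∈ X` has finite `S`-orbit, then the full `G`-orbit of `x`
is finite; in fact `G • x ⊆ (S • x) ∪ {x}`. -/
theorem statement6 {G X : Type*} [Group G] [MulAction G X]
    (S : Subsemigroup G) (hgen : Subgroup.closure (S : Set G) = ⊤)
    (x : X) (hfin : {y : X | ∃ s ∈ S, s • x = y}.Finite) :
    {y : X | ∃ g : G, g • x = y}.Finite ∧
      {y : X | ∃ g : G, g • x = y} ⊆ {y : X | ∃ s ∈ S, s • x = y} ∪ {x} := by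
  set T := {y : X | ∃ s ∈ S, s • x = y} ∪ {x}
  have hT : T.Finite := hfin.union (Set.finite_singleton x)
  have hinv : ∀ g : G, g • T = T :=
    smul_set_eq_self_of_closure_eq_top hgen fun s hs =>
      hT.smul_set_eq_of_subset
        ((S.smul_orbit_union_singleton_subset x hs).trans Set.subset_union_left)
  have horbit : {y : X | ∃ g : G, g • x = y} ⊆ T := by
    rintro _ ⟨g, rfl⟩
    rw [← hinv g]
    exact Set.smul_mem_smul_set (Set.mem_union_right _ rfl)
  exact ⟨hT.subset horbit, horbit⟩
end

section
/- Let X be a geodesic metric space that is δ-hyperbolic (every geodesic triangle is δ-slim) with δ > 0, let h : X → X be an isometry of finite order n ≥ 1 (so h^n = identity), and let K ≥ 6δ. Define fix_K(h) = { y ∈ X : d(y, h^k(y)) ≤ K for every integer k }. Then fix_K(h) is quasiconvex: for any a, b ∈ fix_K(h), any geodesic segment from a to b, and any point x on that geodesic, d(x, fix_K(h)) ≤ n(K + 2δ) + δ. -/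
/-- `γ` is a geodesic segment from `x` to `y`: it is parameterized by arclength on
`[0, dist x y]`, starting at `x` and ending at `y`. -/
def IsGeodesicSegment {X : Type*} [MetricSpace X] (γ : ℝ → X) (x y : X) : Prop :=
  γ 0 = x ∧ γ (dist x y) = y ∧
    ∀ s ∈ Set.Icc (0 : ℝ) (dist x y), ∀ t ∈ Set.Icc (0 : ℝ) (dist x y),
      dist (γ s) (γ t) = |s - t|

/-- `X` is a geodesic metric space: any two points are joined by a geodesic segment. -/
def GeodesicMetricSpace (X : Type*) [MetricSpace X] : Prop :=
  ∀ x y : X, ∃ γ : ℝ → X, IsGeodesicSegment γ x y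

/-- `X` is `δ`-hyperbolic (`δ`-slim triangles): every side of every geodesic triangle is
contained in the closed `δ`-neighbourhood of the union of the other two sides.  (Since
the quantification is over all vertices and all geodesics, and a reversed geodesic is a
geodesic, it suffices to require this for the side from `x` to `z`.) -/
def SlimTriangles (X : Type*) [MetricSpace X] (δ : ℝ) : Prop :=
  ∀ (x y z : X) (γ₁ γ₂ γ₃ : ℝ → X),
    IsGeodesicSegment γ₁ x y → IsGeodesicSegment γ₂ y z → IsGeodesicSegment γ₃ x z →
    ∀ t ∈ Set.Icc (0 : ℝ) (dist x z),
      ∃ p ∈ γ₁ '' Set.Icc (0 : ℝ) (dist x y) ∪ γ₂ '' Set.Icc (0 : ℝ) (dist y z),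
        dist (γ₃ t) p ≤ δ

/-!
Let `x` lie on a geodesic between two points of `fix_K(h)`. By fellow travelling of the geodesics
`[a, b]` and `[h a, h b]`, the displacement `d(x, h x)` is at most `3K + 4δ`, so the `h`-orbit of
`x` has radius at most `n/2 · (3K + 4δ)` about `x`. In a `δ`-hyperbolic space, the points `y`
whose largest distance `r(y)` to a finite set is within `δ` of its infimum (quasi-centres) form
a set of diameter at most `6δ`: the approximate midpoint of two of them would otherwise do
strictly better. The orbit is `h`-invariant, so `h` permutes its quasi-centres, and any
quasi-centre `y` lies in `fix_{6δ}(h) ⊆ fix_K(h)`. Comparing with the midpoint of `x` and its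
farthest orbit point gives `d(x, y) ≤ r(y) ≤ r(x)/2 + 3δ`, which is within the claimed bound.
-/

open Metric Set

section

variable {X : Type*} [MetricSpace X]

namespace IsGeodesicSegment

variable {γ : ℝ → X} {x y : X} {s : ℝ}

theorem dist_source (hγ : IsGeodesicSegment γ x y) (hs : s ∈ Icc 0 (dist x y)) :
    dist (γ s) x = s := by
  have := hγ.2.2 s hs 0 ⟨le_rfl, dist_nonneg⟩
  rwa [hγ.1, sub_zero, abs_of_nonneg hs.1] at this

theorem dist_add_dist (hγ : IsGeodesicSegment γ x y) (hs : s ∈ Icc 0 (dist x y)) :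
    dist x (γ s) + dist (γ s) y = dist x y := by
  have := hγ.2.2 s hs (dist x y) ⟨dist_nonneg, le_rfl⟩
  rw [hγ.2.1, abs_of_nonpos (by linarith [hs.2])] at this
  rw [dist_comm, hγ.dist_source hs, this]
  ring

theorem comp_isometry {Y : Type*} [MetricSpace Y] {f : X → Y} (hf : Isometry f)
    (hγ : IsGeodesicSegment γ x y) : IsGeodesicSegment (f ∘ γ) (f x) (f y) := by
  rw [IsGeodesicSegment, hf.dist_eq]
  exact ⟨congrArg f hγ.1, congrArg f hγ.2.1, fun s hs t ht => by
    rw [Function.comp_apply, Function.comp_apply, hf.dist_eq, hγ.2.2 s hs t ht]⟩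

end IsGeodesicSegment

namespace SlimTriangles

variable {δ : ℝ}

theorem exists_approx_midpoint (hgeo : GeodesicMetricSpace X) (hslim : SlimTriangles X δ)
    (y y' : X) :
    ∃ m : X, ∀ z : X, dist z m ≤ max (dist z y) (dist z y') - dist y y' / 2 + 2 * δ := by
  obtain ⟨γ, hγ⟩ := hgeo y y'
  have hmid : dist y y' / 2 ∈ Icc 0 (dist y y') := ⟨by positivity, half_le_self dist_nonneg⟩
  have hmy := hγ.dist_source hmid
  have hmy' := hγ.dist_add_dist hmid
  set m := γ (dist y y' / 2)
  refine ⟨m, fun z => ?_⟩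
  obtain ⟨γ₁, hγ₁⟩ := hgeo y z
  obtain ⟨γ₂, hγ₂⟩ := hgeo z y'
  obtain ⟨p, hp, hmp⟩ := hslim y z y' γ₁ γ₂ γ hγ₁ hγ₂ hγ _ hmid
  -- `p` is `δ`-close to the midpoint and lies between `z` and one endpoint `w`, whence
  -- `d(z, m) ≤ d(z, p) + δ = d(z, w) - d(p, w) + δ ≤ d(z, w) - d(y, y') / 2 + 2δ`.
  rcases hp with ⟨u, hu, rfl⟩ | ⟨u, hu, rfl⟩
  · have := hγ₁.dist_add_dist hu
    linarith [dist_triangle z (γ₁ u) m, dist_triangle m (γ₁ u) y,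
      dist_comm y (γ₁ u), dist_comm y z, dist_comm z (γ₁ u),
      dist_comm (γ₁ u) m, le_max_left (dist z y) (dist z y')]
  · have := hγ₂.dist_add_dist hu
    linarith [dist_triangle z (γ₂ u) m, dist_triangle m (γ₂ u) y', dist_comm y m,
      dist_comm (γ₂ u) m, le_max_right (dist z y) (dist z y')]

theorem exists_dist_le_of_dist_endpoints_le (hgeo : GeodesicMetricSpace X)
    (hslim : SlimTriangles X δ) {a b a' b' : X} {K : ℝ} (ha : dist a a' ≤ K)
    (hb : dist b b' ≤ K)
    {γ γ' : ℝ → X} (hγ : IsGeodesicSegment γ a b) (hγ' : IsGeodesicSegment γ' a' b')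
    {t : ℝ} (ht : t ∈ Icc 0 (dist a b)) :
    ∃ s ∈ Icc 0 (dist a' b'), dist (γ t) (γ' s) ≤ K + 2 * δ := by
  obtain ⟨σ, hσ⟩ := hgeo a b'
  obtain ⟨τ, hτ⟩ := hgeo b' b
  obtain ⟨p, hp, hγp⟩ := hslim a b' b σ τ γ hσ hτ hγ t ht
  rcases hp with ⟨u, hu, rfl⟩ | ⟨u, hu, rfl⟩
  · obtain ⟨ρ, hρ⟩ := hgeo a a'
    obtain ⟨q, hq, hσq⟩ := hslim a a' b' ρ γ' σ hρ hγ' hσ u hu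
    rcases hq with ⟨v, hv, rfl⟩ | ⟨v, hv, rfl⟩
    · refine ⟨0, ⟨le_rfl, dist_nonneg⟩, ?_⟩
      have := hρ.dist_add_dist hv
      rw [hγ'.1]
      linarith [dist_triangle4 (γ t) (σ u) (ρ v) a', dist_nonneg (x := a) (y := ρ v)]
    · exact ⟨v, hv, by
        linarith [dist_triangle (γ t) (σ u) (γ' v), dist_nonneg (x := a) (y := a')]⟩
  · refine ⟨dist a' b', ⟨dist_nonneg, le_rfl⟩, ?_⟩
    have := hτ.dist_add_dist hu
    rw [hγ'.2.1]
    linarith [dist_triangle (γ t) (τ u) b', dist_comm b' (τ u), dist_comm b' b,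
      dist_nonneg (x := τ u) (y := b), dist_nonneg (x := γ t) (y := τ u)]

theorem dist_apply_le_of_isometry (hgeo : GeodesicMetricSpace X) (hslim : SlimTriangles X δ)
    {f : X → X} (hf : Isometry f) {a b : X} {K : ℝ} (ha : dist a (f a) ≤ K)
    (hb : dist b (f b) ≤ K) {γ : ℝ → X} (hγ : IsGeodesicSegment γ a b) {t : ℝ}
    (ht : t ∈ Icc 0 (dist a b)) : dist (γ t) (f (γ t)) ≤ 3 * K + 4 * δ := by
  obtain ⟨s, hs, hts⟩ :=
    hslim.exists_dist_le_of_dist_endpoints_le hgeo ha hb hγ (hγ.comp_isometry hf) ht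
  rw [hf.dist_eq] at hs
  rw [Function.comp_apply] at hts
  have hst : dist (f (γ s)) (f (γ t)) = |s - t| := by rw [hf.dist_eq, hγ.2.2 s hs t ht]
  -- `t = d(γ t, a)` and `s = d(f (γ s), f a)`, so `|s - t| ≤ d(γ t, f (γ s)) + d(a, f a)`.
  have hdiff : |s - t| ≤ 2 * K + 2 * δ := by
    have h₁ := hγ.dist_source ht
    have h₂ : dist (f (γ s)) (f a) = s := by rw [hf.dist_eq, hγ.dist_source hs]
    rw [abs_sub_le_iff]
    constructor <;> linarith [dist_triangle4 (f (γ s)) (γ t) a (f a),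
      dist_triangle4 (γ t) (f (γ s)) (f a) a, dist_comm (γ t) (f (γ s)), dist_comm a (f a)]
  calc dist (γ t) (f (γ t)) ≤ dist (γ t) (f (γ s)) + dist (f (γ s)) (f (γ t)) :=
        dist_triangle _ _ _
    _ ≤ 3 * K + 4 * δ := by rw [hst]; linarith

end SlimTriangles

theorem exists_zpow_eq_abs_le_of_pow_eq_one {G : Type*} [Group G] {g : G} {n : ℕ} (hn : 0 < n)
    (hg : g ^ n = 1) (k : ℤ) : ∃ j : ℤ, g ^ k = g ^ j ∧ 2 * |j| ≤ n := by
  have hk : g ^ k = g ^ (k % n) := zpow_eq_zpow_emod' k hg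
  have h₀ : 0 ≤ k % n := Int.emod_nonneg _ (by omega)
  have h₁ : k % n < n := Int.emod_lt_of_pos _ (by omega)
  by_cases hsmall : 2 * (k % n) ≤ n
  · exact ⟨k % n, hk, by rw [abs_of_nonneg h₀]; exact hsmall⟩
  · refine ⟨k % n - n, by rw [hk, zpow_sub, zpow_natCast, hg, inv_one, mul_one], ?_⟩
    rw [abs_of_neg (by omega)]
    omega

theorem IsometryEquiv.dist_zpow_apply_le (g : X ≃ᵢ X) (x : X) (k : ℤ) :
    dist x ((g ^ k) x) ≤ |k| * dist x (g x) := by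
  have hpow : ∀ m : ℕ, dist x ((g ^ m) x) ≤ m * dist x (g x) := by
    intro m
    induction m with
    | zero => simp
    | succ m ih =>
      calc dist x ((g ^ (m + 1)) x) ≤ dist x ((g ^ m) x) + dist ((g ^ m) x) ((g ^ m) (g x)) :=
            dist_triangle _ _ _
        _ ≤ (m + 1 : ℕ) * dist x (g x) := by push_cast; rw [(g ^ m).dist_eq]; linarith
  rcases Int.eq_nat_or_neg k with ⟨m, rfl | rfl⟩
  · simpa using hpow m
  · calc dist x ((g ^ (-(m : ℤ))) x) = dist ((g ^ m) x) x := by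
          rw [← (g ^ m).dist_eq, ← IsometryEquiv.mul_apply, ← zpow_natCast, ← zpow_add,
            add_neg_cancel, zpow_zero, IsometryEquiv.coe_one, id]
      _ ≤ |-(m : ℤ)| * dist x (g x) := by simpa [dist_comm] using hpow m

namespace Finset

variable (A : Finset X) (hA : A.Nonempty)

def maxDist (y : X) : ℝ := A.sup' hA (dist y)

variable {A hA}

theorem dist_le_maxDist {a : X} (ha : a ∈ A) (y : X) : dist y a ≤ A.maxDist ⟨a, ha⟩ y :=
  le_sup' (dist y) ha

theorem bddBelow_range_maxDist : BddBelow (Set.range (A.maxDist hA)) :=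
  ⟨0, by
    rintro _ ⟨y, rfl⟩
    obtain ⟨a, ha⟩ := hA
    exact dist_nonneg.trans (dist_le_maxDist ha y)⟩

theorem maxDist_apply_le_of_subset_image {g : X → X} (hg : Isometry g)
    (hgA : ∀ a ∈ A, ∃ b ∈ A, g b = a) (y : X) : A.maxDist hA (g y) ≤ A.maxDist hA y :=
  sup'_le _ _ fun a ha => by
    obtain ⟨b, hb, rfl⟩ := hgA a ha
    rw [hg.dist_eq]
    exact dist_le_maxDist hb y

end Finset

namespace SlimTriangles

variable {δ : ℝ} {A : Finset X} {hA : A.Nonempty}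

theorem iInf_maxDist_le (hgeo : GeodesicMetricSpace X) (hslim : SlimTriangles X δ) (y y' : X) :
    ⨅ z, A.maxDist hA z ≤ max (A.maxDist hA y) (A.maxDist hA y') - dist y y' / 2 + 2 * δ := by
  obtain ⟨m, hm⟩ := hslim.exists_approx_midpoint hgeo y y'
  refine (ciInf_le Finset.bddBelow_range_maxDist m).trans (Finset.sup'_le _ _ fun a ha => ?_)
  rw [dist_comm]
  linarith [hm a, max_le_max (dist_comm a y ▸ A.dist_le_maxDist ha y)
    (dist_comm a y' ▸ A.dist_le_maxDist ha y')]

theorem dist_le_of_maxDist_le_iInf_add (hgeo : GeodesicMetricSpace X)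
    (hslim : SlimTriangles X δ) {ε : ℝ} {y y' : X}
    (hy : A.maxDist hA y ≤ (⨅ z, A.maxDist hA z) + ε)
    (hy' : A.maxDist hA y' ≤ (⨅ z, A.maxDist hA z) + ε) : dist y y' ≤ 2 * ε + 4 * δ := by
  have := hslim.iInf_maxDist_le (hA := hA) hgeo y y'
  linarith [max_le hy hy']

end SlimTriangles

namespace IsometryEquiv

open scoped Classical in
/-- When `h ^ n = 1`, the exponents in `[-n, n]` already sweep out the whole orbit of `x`. -/
noncomputable def orbitFinset (h : X ≃ᵢ X) (n : ℕ) (x : X) : Finset X :=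
  (Finset.Icc (-(n : ℤ)) n).image fun k => (h ^ k) x

variable {h : X ≃ᵢ X} {n : ℕ}

theorem exists_zpow_apply_eq_of_mem_orbitFinset {x a : X} (ha : a ∈ h.orbitFinset n x) :
    ∃ k : ℤ, (h ^ k) x = a := by
  classical
  obtain ⟨k, -, hk⟩ := Finset.mem_image.1 ha
  exact ⟨k, hk⟩

theorem zpow_apply_mem_orbitFinset (hn : 0 < n) (hord : h ^ n = 1) (x : X) (k : ℤ) :
    (h ^ k) x ∈ h.orbitFinset n x := by
  classical
  obtain ⟨j, hkj, hj⟩ := exists_zpow_eq_abs_le_of_pow_eq_one hn hord k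
  refine Finset.mem_image.2 ⟨j, Finset.mem_Icc.2 ?_, by rw [hkj]⟩
  constructor <;> linarith [le_abs_self j, neg_abs_le j]

theorem maxDist_orbitFinset_zpow_apply_le (hn : 0 < n) (hord : h ^ n = 1) {x : X}
    (hA : (h.orbitFinset n x).Nonempty) (k : ℤ) (y : X) :
    (h.orbitFinset n x).maxDist hA ((h ^ k) y) ≤ (h.orbitFinset n x).maxDist hA y :=
  Finset.maxDist_apply_le_of_subset_image (h ^ k).isometry (fun a ha => by
    obtain ⟨i, rfl⟩ := exists_zpow_apply_eq_of_mem_orbitFinset ha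
    refine ⟨(h ^ (i - k)) x, zpow_apply_mem_orbitFinset hn hord x _, ?_⟩
    rw [← mul_apply, ← zpow_add, add_sub_cancel]) y

theorem maxDist_orbitFinset_self_le (hn : 0 < n) (hord : h ^ n = 1) {x : X}
    (hA : (h.orbitFinset n x).Nonempty) :
    (h.orbitFinset n x).maxDist hA x ≤ n / 2 * dist x (h x) :=
  Finset.sup'_le _ _ fun a ha => by
    obtain ⟨k, rfl⟩ := exists_zpow_apply_eq_of_mem_orbitFinset ha
    obtain ⟨j, hkj, hj⟩ := exists_zpow_eq_abs_le_of_pow_eq_one hn hord k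
    have hj' : ((|j| : ℤ) : ℝ) ≤ n / 2 := by
      rw [le_div_iff₀ two_pos]; exact_mod_cast (mul_comm (2 : ℤ) _ ▸ hj)
    rw [hkj]
    exact (h.dist_zpow_apply_le x j).trans (by gcongr)

end IsometryEquiv

end

/-- Let `X` be a geodesic `δ`-hyperbolic metric space with `δ > 0`, let `h` be an isometry
of `X` of finite order `n ≥ 1`, and let `K ≥ 6δ`.  Then the coarse fixed set
`fix_K(h) = { y : d(y, h^k y) ≤ K for all k ∈ ℤ }` is quasiconvex: any point on any
geodesic segment between two points of `fix_K(h)` lies within distance `n(K + 2δ) + δ` of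
`fix_K(h)`. -/
theorem statement10 {X : Type*} [MetricSpace X]
    (δ : ℝ) (hδ : 0 < δ) (hgeo : GeodesicMetricSpace X) (hslim : SlimTriangles X δ)
    (h : X ≃ᵢ X) (n : ℕ) (hn : 1 ≤ n) (hord : h ^ n = 1)
    (K : ℝ) (hK : 6 * δ ≤ K)
    (a b : X)
    (ha : a ∈ {y : X | ∀ k : ℤ, dist y ((h ^ k) y) ≤ K})
    (hb : b ∈ {y : X | ∀ k : ℤ, dist y ((h ^ k) y) ≤ K})
    (γ : ℝ → X) (hγ : IsGeodesicSegment γ a b)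
    (t : ℝ) (ht : t ∈ Set.Icc (0 : ℝ) (dist a b)) :
    Metric.infDist (γ t) {y : X | ∀ k : ℤ, dist y ((h ^ k) y) ≤ K} ≤
      (n : ℝ) * (K + 2 * δ) + δ := by
  have hn₀ : 0 < n := hn
  set x := γ t
  have hD : dist x (h x) ≤ 3 * K + 4 * δ :=
    hslim.dist_apply_le_of_isometry hgeo h.isometry (by simpa using ha 1) (by simpa using hb 1)
      hγ ht
  set A := h.orbitFinset n x
  have hxA : x ∈ A := by simpa using h.zpow_apply_mem_orbitFinset hn₀ hord x 0
  have hA : A.Nonempty := ⟨x, hxA⟩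
  have hinv := h.maxDist_orbitFinset_zpow_apply_le hn₀ hord hA
  -- Compare with the midpoint of `x` and its farthest orbit point.
  have hR : ⨅ z, A.maxDist hA z ≤ A.maxDist hA x / 2 + 2 * δ := by
    obtain ⟨a, haA, hxa⟩ := Finset.exists_mem_eq_sup' hA (dist x)
    obtain ⟨k, rfl⟩ := IsometryEquiv.exists_zpow_apply_eq_of_mem_orbitFinset haA
    have := hslim.iInf_maxDist_le (hA := hA) hgeo x ((h ^ k) x)
    rw [max_eq_left (hinv k x)] at this
    change A.maxDist hA x = _ at hxa
    linarith
  have : Nonempty X := ⟨x⟩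
  obtain ⟨y, hy⟩ := exists_lt_of_ciInf_lt (lt_add_of_pos_right (⨅ z, A.maxDist hA z) hδ)
  have hyfix : y ∈ {y : X | ∀ k : ℤ, dist y ((h ^ k) y) ≤ K} := fun k => by
    have := hslim.dist_le_of_maxDist_le_iInf_add hgeo hy.le ((hinv k y).trans hy.le)
    linarith
  have hxr := h.maxDist_orbitFinset_self_le hn₀ hord hA
  have hn₁ : (1 : ℝ) ≤ n := by exact_mod_cast hn
  calc infDist x _ ≤ dist x y := infDist_le_dist_of_mem hyfix
    _ ≤ A.maxDist hA y := dist_comm x y ▸ Finset.dist_le_maxDist hxA y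
    _ ≤ n / 4 * (3 * K + 4 * δ) + 3 * δ := by nlinarith
    _ ≤ n * (K + 2 * δ) + δ := by nlinarith
end

section
/- Let G be a countable discrete group acting measurably on a measurable space X, let μ be a probability measure on G, let ν be a μ-stationary probability measure on X, and let S be the subsemigroup of G generated by the inverses of the elements of the support of μ (i.e. by { g⁻¹ : μ({g}) > 0 }). Let A ⊆ X be a measurable set such that: (i) for every h in S ∪ {1}, the family of sets { (gh)A : g ∈ S } contains infinitely many distinct sets; and (ii) whenever g₁, g₂ ∈ S ∪ {1} and g₁A ≠ g₂A, one has ν(g₁A ∩ g₂A) = 0. Then ν(hA) = 0 for every h ∈ S ∪ {1}; in particular ν(A) = 0. -/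
open ENNReal MeasureTheory Pointwise

/-! The function `h ↦ ν (h • A)` on `S ∪ {1}` is `μ`-harmonic: `ν (h • A)` is the `μ`-average of
`ν ((g⁻¹ * h) • A)`. Since distinct translates are almost disjoint, only finitely many of them
have measure `≥ ε` for each `ε > 0`, so this function attains its maximum `M`. By the maximum
principle the value `M` propagates from a maximiser `h₀` to every `(s * h₀) • A`, `s ∈ S`; these
are infinitely many almost disjoint sets of measure `M` in a probability space, so `M = 0`. -/

section AEDisjointFamily

variable {α : Type*} [MeasurableSpace α] (ν : Measure α) [IsFiniteMeasure ν] {𝒜 : Set (Set α)}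

lemma finite_setOf_le_measure_of_pairwise_aedisjoint
    (h𝒜 : ∀ B ∈ 𝒜, NullMeasurableSet B ν) (hd : 𝒜.Pairwise (AEDisjoint ν))
    {ε : ℝ≥0∞} (hε : 0 < ε) : {B ∈ 𝒜 | ε ≤ ν B}.Finite := by
  have hfin := Measure.finite_const_le_meas_of_disjoint_iUnion₀ ν hε
    (As := fun B : 𝒜 => (B : Set α)) (fun B => h𝒜 B B.2)
    (fun B C hBC => hd B.2 C.2 (Subtype.coe_injective.ne hBC))
    (measure_ne_top ν _)
  convert hfin.image Subtype.val using 1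
  ext B
  simp [and_comm]

lemma exists_forall_measure_le_of_pairwise_aedisjoint
    (h𝒜 : ∀ B ∈ 𝒜, NullMeasurableSet B ν) (hd : 𝒜.Pairwise (AEDisjoint ν))
    (hne : 𝒜.Nonempty) : ∃ B₀ ∈ 𝒜, ∀ B ∈ 𝒜, ν B ≤ ν B₀ := by
  by_cases hnull : ∀ B ∈ 𝒜, ν B = 0
  · obtain ⟨B₀, hB₀⟩ := hne
    exact ⟨B₀, hB₀, fun B hB => (hnull B hB).trans_le bot_le⟩
  push Not at hnull
  obtain ⟨C, hC, hCpos⟩ := hnull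
  obtain ⟨B₀, ⟨hB₀, hCB₀⟩, hmax⟩ := Set.exists_max_image _ ν
    (finite_setOf_le_measure_of_pairwise_aedisjoint ν h𝒜 hd (pos_iff_ne_zero.2 hCpos))
    ⟨C, hC, le_rfl⟩
  refine ⟨B₀, hB₀, fun B hB => ?_⟩
  rcases le_or_gt (ν C) (ν B) with hCB | hBC
  · exact hmax B ⟨hB, hCB⟩
  · exact hBC.le.trans hCB₀

end AEDisjointFamily

lemma PMF.apply_eq_of_tsum_mul_eq {α : Type*} (μ : PMF α) {u : α → ℝ≥0∞} {M : ℝ≥0∞}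
    (hM : M ≠ ∞) (hle : ∀ a ∈ μ.support, u a ≤ M) (hsum : ∑' a, μ a * u a = M)
    {a : α} (ha : a ∈ μ.support) : u a = M := by
  refine (hle a ha).antisymm (not_lt.1 fun hlt => ?_)
  have hterm : ∀ b, μ b * u b ≤ μ b * M := fun b => by
    by_cases hb : b ∈ μ.support
    · exact mul_le_mul_right (hle b hb) _
    · rw [PMF.mem_support_iff, not_not] at hb
      simp [hb]
  have hstrict : μ a * u a < μ a * M :=
    (ENNReal.mul_lt_mul_iff_right ((μ.mem_support_iff a).1 ha) (μ.apply_ne_top a)).2 hlt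
  have := ENNReal.tsum_lt_tsum (hsum ▸ hM) hterm hstrict
  rw [hsum, ENNReal.tsum_mul_right, μ.tsum_coe, one_mul] at this
  exact this.false

lemma Subsemigroup.mul_closure_induction {G : Type*} [Semigroup G] {T : Set G} {P : G → Prop}
    (hT : ∀ t ∈ T, ∀ h, P h → P (t * h)) {s : G} (hs : s ∈ Subsemigroup.closure T) {h : G}
    (hh : P h) : P (s * h) := by
  induction hs using Subsemigroup.closure_induction generalizing h with
  | mem t ht => exact hT t ht h hh
  | mul x y _ _ ihx ihy => simpa only [mul_assoc] using ihx (ihy hh)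

lemma PMF.apply_mul_eq_of_isMaxOn {G : Type*} [Group G] (μ : PMF G) {f : G → ℝ≥0∞}
    {T : Set G} (hT : ∀ g ∈ μ.support, ∀ h ∈ T, g⁻¹ * h ∈ T)
    (hf : ∀ h ∈ T, f h = ∑' g, μ g * f (g⁻¹ * h)) {h₀ : G} (hh₀ : h₀ ∈ T)
    (hmax : IsMaxOn f T h₀) (hfin : f h₀ ≠ ∞) {s : G}
    (hs : s ∈ Subsemigroup.closure ((fun g : G => g⁻¹) '' μ.support)) : f (s * h₀) = f h₀ := by
  refine (Subsemigroup.mul_closure_induction (P := fun h => h ∈ T ∧ f h = f h₀) ?_ hs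
    ⟨hh₀, rfl⟩).2
  rintro _ ⟨g, hg, rfl⟩ h ⟨hh, hfh⟩
  exact ⟨hT g hg h hh, μ.apply_eq_of_tsum_mul_eq hfin (fun a ha => hmax (hT a ha h hh))
    (hfh ▸ (hf h hh).symm) hg⟩

lemma measure_smul_eq_tsum_of_stationary {G X : Type*} [Group G] [MeasurableSpace X]
    [MulAction G X] [MeasurableConstSMul G X] {μ : PMF G} {ν : Measure X}
    (hstat : ∀ B : Set X, MeasurableSet B → ν B = ∑' g : G, μ g * ν ((g • ·) ⁻¹' B))
    {B : Set X} (hB : MeasurableSet B) (h : G) :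
    ν (h • B) = ∑' g, μ g * ν ((g⁻¹ * h) • B) := by
  simp only [hstat _ (hB.const_smul h), Set.preimage_smul, smul_smul]

theorem statement12_general {G X : Type*} [Group G]
    [MeasurableSpace X] [MulAction G X]
    (hmeas : ∀ g : G, Measurable fun x : X => g • x)
    (μ : PMF G) (ν : Measure X) [IsProbabilityMeasure ν]
    (hstat : ∀ B : Set X, MeasurableSet B →
      ν B = ∑' g : G, μ g * ν ((fun x : X => g • x) ⁻¹' B))
    (S : Subsemigroup G)
    (hS : S = Subsemigroup.closure ((fun g : G => g⁻¹) '' μ.support))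
    (A : Set X) (hA : MeasurableSet A)
    (hinf : ∀ h : G, (h ∈ S ∨ h = 1) →
      {B : Set X | ∃ g ∈ S, B = (g * h) • A}.Infinite)
    (hmeager : ∀ g₁ g₂ : G, (g₁ ∈ S ∨ g₁ = 1) → (g₂ ∈ S ∨ g₂ = 1) →
      g₁ • A ≠ g₂ • A → ν ((g₁ • A) ∩ (g₂ • A)) = 0) :
    (∀ h : G, (h ∈ S ∨ h = 1) → ν (h • A) = 0) ∧ ν A = 0 := by
  have : MeasurableConstSMul G X := ⟨hmeas⟩
  set T : Set G := {h | h ∈ S ∨ h = 1}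
  have hST : ∀ s ∈ S, ∀ h ∈ T, s * h ∈ S := by
    rintro s hs h (hh | rfl)
    exacts [mul_mem hs hh, by simpa using hs]
  have hT : ∀ g ∈ μ.support, ∀ h ∈ T, g⁻¹ * h ∈ T := fun g hg h hh =>
    Or.inl (hST _ (hS ▸ Subsemigroup.subset_closure ⟨g, hg, rfl⟩) h hh)
  set 𝒜 := (· • A) '' T
  have h𝒜 : ∀ B ∈ 𝒜, NullMeasurableSet B ν := by
    rintro _ ⟨h, -, rfl⟩
    exact (hA.const_smul h).nullMeasurableSet
  have hd : 𝒜.Pairwise (AEDisjoint ν) := by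
    rintro _ ⟨g₁, hg₁, rfl⟩ _ ⟨g₂, hg₂, rfl⟩
    exact hmeager g₁ g₂ hg₁ hg₂
  obtain ⟨_, ⟨h₀, hh₀, rfl⟩, hmax⟩ :=
    exists_forall_measure_le_of_pairwise_aedisjoint ν h𝒜 hd ⟨A, 1, Or.inr rfl, one_smul G A⟩
  have hM : ν (h₀ • A) = 0 := by
    by_contra hM
    refine hinf h₀ hh₀ ((finite_setOf_le_measure_of_pairwise_aedisjoint ν h𝒜 hd
      (pos_iff_ne_zero.2 hM)).subset ?_)
    rintro _ ⟨s, hs, rfl⟩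
    refine ⟨⟨_, Or.inl (hST s hs h₀ hh₀), rfl⟩, (μ.apply_mul_eq_of_isMaxOn hT
      (fun h _ => measure_smul_eq_tsum_of_stationary hstat hA h) hh₀
      (fun h hh => hmax _ ⟨h, hh, rfl⟩) (measure_ne_top ν _) (hS ▸ hs)).ge⟩
  have hzero : ∀ h ∈ T, ν (h • A) = 0 := fun h hh => le_zero_iff.1 (hM ▸ hmax _ ⟨h, hh, rfl⟩)
  exact ⟨hzero, by simpa using hzero 1 (Or.inr rfl)⟩

/-- Let a countable discrete group `G` act measurably on a measurable space `X`, let `μ`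
be a probability distribution on `G`, let `ν` be a `μ`-stationary probability measure on
`X`, and let `S` be the subsemigroup of `G` generated by the inverses of the elements of
the support of `μ`.  Let `A ⊆ X` be a measurable set such that
(i) for every `h ∈ S ∪ {1}`, the family `{ (g h) A : g ∈ S }` contains infinitely many
distinct sets, and
(ii) whenever `g₁, g₂ ∈ S ∪ {1}` and `g₁ A ≠ g₂ A`, one has `ν(g₁ A ∩ g₂ A) = 0`.
Then `ν(h A) = 0` for every `h ∈ S ∪ {1}`; in particular `ν(A) = 0`. -/
theorem statement12 {G X : Type*} [Group G] [Countable G]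
    [MeasurableSpace X] [MulAction G X]
    (hmeas : ∀ g : G, Measurable fun x : X => g • x)
    (μ : PMF G) (ν : Measure X) [IsProbabilityMeasure ν]
    (hstat : ∀ B : Set X, MeasurableSet B →
      ν B = ∑' g : G, μ g * ν ((fun x : X => g • x) ⁻¹' B))
    (S : Subsemigroup G)
    (hS : S = Subsemigroup.closure ((fun g : G => g⁻¹) '' μ.support))
    (A : Set X) (hA : MeasurableSet A)
    (hinf : ∀ h : G, (h ∈ S ∨ h = 1) →
      {B : Set X | ∃ g ∈ S, B = (g * h) • A}.Infinite)
    (hmeager : ∀ g₁ g₂ : G, (g₁ ∈ S ∨ g₁ = 1) → (g₂ ∈ S ∨ g₂ = 1) →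
      g₁ • A ≠ g₂ • A → ν ((g₁ • A) ∩ (g₂ • A)) = 0) :
    (∀ h : G, (h ∈ S ∨ h = 1) → ν (h • A) = 0) ∧ ν A = 0 :=
  statement12_general hmeas μ ν hstat S hS A hA hinf hmeager
end
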